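/- arXiv:1708.00860 — 4 statements merged into one kernel-verified Lean document; each statement's English description precedes it below -/
import Mathlib

section
/- Every locally ball B_{e,α}[x,r] = {y ∈ X : ν_{x−y,e}(r) ≥ α} in a Menger 2-PN space (X, ν) is a convex set. -/
open Filter Finset

/-- A Menger 2-probabilistic norm: `ν x y` is a distance distribution function
satisfying axioms (A1)–(A5). -/
structure IsMenger2PN (X : Type*) [AddCommGroup X] [Module ℝ X]
    (ν : X → X → ℝ → ℝ) : Prop where
  nonneg : ∀ x y t, 0 ≤ ν x y t
  le_one : ∀ x y t, ν x y t ≤ 1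
  mono : ∀ x y, Monotone (ν x y)
  zero : ∀ x y t, t ≤ 0 → ν x y t = 0
  one_iff : ∀ x y : X, (∀ t, 0 < t → ν x y t = 1) ↔ ¬ LinearIndependent ℝ ![x, y]
  symm : ∀ x y t, ν x y t = ν y x t
  smul : ∀ (α : ℝ), α ≠ 0 → ∀ x y t, ν (α • x) y t = ν x y (t / |α|)
  add : ∀ x y z s t, min (ν x z s) (ν y z t) ≤ ν (x + y) z (s + t)

variable {X : Type*} [AddCommGroup X] [Module ℝ X]

/-- Convergence of a sequence in a Menger 2-PN space. -/
def TendsTo2PN (ν : X → X → ℝ → ℝ) (s : ℕ → X) (x : X) : Prop :=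
  ∀ z : X, ∀ t : ℝ, 0 < t → Tendsto (fun n => ν (s n - x) z t) atTop (nhds 1)

/-- The locally ball `B_{e,α}[x,r]`. -/
def locallyBall (ν : X → X → ℝ → ℝ) (e : X) (α : ℝ) (x : X) (r : ℝ) : Set X :=
  {y : X | α ≤ ν (x - y) e r}

section

variable {ν : X → X → ℝ → ℝ}

namespace IsMenger2PN

theorem smul_of_pos (hν : IsMenger2PN X ν) {c : ℝ} (hc : 0 < c) (x y : X) (t : ℝ) :
    ν (c • x) y (c * t) = ν x y t := by
  rw [hν.smul c hc.ne', abs_of_pos hc, mul_div_cancel_left₀ t hc.ne']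

theorem min_le_smul_add_smul (hν : IsMenger2PN X ν) {a b : ℝ} (ha : 0 < a) (hb : 0 < b)
    (x y z : X) (s t : ℝ) :
    min (ν x z s) (ν y z t) ≤ ν (a • x + b • y) z (a * s + b * t) := by
  simpa only [hν.smul_of_pos ha, hν.smul_of_pos hb] using
    hν.add (a • x) (b • y) z (a * s) (b * t)

end IsMenger2PN

theorem convex_locallyBall (hν : IsMenger2PN X ν) (e : X) (α : ℝ) (x : X) (r : ℝ) :
    Convex ℝ (locallyBall ν e α x r) := by
  refine convex_iff_forall_pos.2 fun y hy z hz a b ha hb hab => ?_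
  have hsub : x - (a • y + b • z) = a • (x - y) + b • (x - z) := by
    linear_combination (norm := module) (-hab) • x
  have hr : a * r + b * r = r := by rw [← add_mul, hab, one_mul]
  show α ≤ ν (x - (a • y + b • z)) e r
  rw [hsub, ← hr]
  exact (le_min hy hz).trans (hν.min_le_smul_add_smul ha hb _ _ e r r)

end

theorem locallyBall_convex_general (ν : X → X → ℝ → ℝ) (hν : IsMenger2PN X ν)
    (e x : X) (α r : ℝ) :
    ∀ a ∈ locallyBall ν e α x r, ∀ b ∈ locallyBall ν e α x r,
      ∀ lam : ℝ, 0 < lam → lam < 1 →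
        lam • a + (1 - lam) • b ∈ locallyBall ν e α x r :=
  fun _a ha _b hb _lam hlam hlam1 =>
    convex_locallyBall hν e α x r ha hb hlam.le (sub_pos.2 hlam1).le (add_sub_cancel _ _)

theorem locallyBall_convex (ν : X → X → ℝ → ℝ) (hν : IsMenger2PN X ν)
    (e x : X) (α r : ℝ) (hα : 0 < α) (hα1 : α < 1) (hr : 0 < r) :
    ∀ a ∈ locallyBall ν e α x r, ∀ b ∈ locallyBall ν e α x r,
      ∀ lam : ℝ, 0 < lam → lam < 1 →
        lam • a + (1 - lam) • b ∈ locallyBall ν e α x r :=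
  locallyBall_convex_general ν hν e x α r
end

section
/- In a Menger 2-PN space (X, ν), every closed convex subset of X is convex series closed. -/
/-!
The partial sums `S N` of a convex series need not lie in `F` (their weights add up to
`L N ≤ 1`), and they cannot simply be renormalised to `S N / L N`, since the axioms do not
force `ν x z t → 1` as `t → ∞`. Instead extrapolate: `w N = S N + c N • (S K - S N)` for a
later index `K` and `c N ∈ [0, 2]` chosen so that the weights add up to `1`. Then `w N ∈ F` by
convexity, and `w N - s = (1 - c N) • (S N - s) + c N • (S K - s)` tends to `0` by the scaling
and triangle axioms, the coefficients being bounded.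
-/

open Filter Finset

variable {X : Type*} [AddCommGroup X] [Module ℝ X]

/-- `(l, x)` is a convex series of elements of `F`. -/
def IsConvexSeries (F : Set X) (l : ℕ → ℝ) (x : ℕ → X) : Prop :=
  (∀ n, x n ∈ F) ∧ (∀ n, 0 ≤ l n) ∧ HasSum l 1

/-- The series `Σ l n • x n` converges to `s` in the 2-PN sense. -/
def SeriesConv2PN (ν : X → X → ℝ → ℝ) (l : ℕ → ℝ) (x : ℕ → X) (s : X) : Prop :=
  TendsTo2PN ν (fun N => ∑ i ∈ Finset.range N, l i • x i) s

/-- `F` contains the sum of every convergent convex series of its elements. -/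
def ConvexSeriesClosed (ν : X → X → ℝ → ℝ) (F : Set X) : Prop :=
  ∀ (l : ℕ → ℝ) (x : ℕ → X) (s : X),
    IsConvexSeries F l x → SeriesConv2PN ν l x s → s ∈ F

/-- Every convex series of elements of `F` converges to a point of `F`. -/
def ConvexSeriesCompact (ν : X → X → ℝ → ℝ) (F : Set X) : Prop :=
  ∀ (l : ℕ → ℝ) (x : ℕ → X), IsConvexSeries F l x → ∃ s ∈ F, SeriesConv2PN ν l x s

/-- The (sequential) closure of a set in a Menger 2-PN space. -/
def clPts (ν : X → X → ℝ → ℝ) (E : Set X) : Set X :=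
  {x : X | ∃ s : ℕ → X, (∀ n, s n ∈ E) ∧ TendsTo2PN ν s x}

namespace IsMenger2PN

variable {ν : X → X → ℝ → ℝ}

theorem zero_left (hν : IsMenger2PN X ν) (z : X) {t : ℝ} (ht : 0 < t) : ν 0 z t = 1 :=
  (hν.one_iff 0 z).2 (fun h => h.ne_zero 0 rfl) t ht

theorem le_smul_of_abs_le (hν : IsMenger2PN X ν) {C α : ℝ} (hα : |α| ≤ C)
    (x z : X) {t : ℝ} (ht : 0 < t) : ν x z (t / C) ≤ ν (α • x) z t := by
  rcases eq_or_ne α 0 with rfl | hα0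
  · rw [zero_smul, hν.zero_left z ht]
    exact hν.le_one _ _ _
  · rw [hν.smul α hα0]
    exact hν.mono x z (div_le_div_of_nonneg_left ht.le (abs_pos.2 hα0) hα)

end IsMenger2PN

namespace TendsTo2PN

variable {ν : X → X → ℝ → ℝ} {u v : ℕ → X} {s : X}

theorem add_smul_sub (hν : IsMenger2PN X ν) (hu : TendsTo2PN ν u s) (hv : TendsTo2PN ν v s)
    {c : ℕ → ℝ} {C : ℝ} (hc : ∀ n, |c n| ≤ C) :
    TendsTo2PN ν (fun n => u n + c n • (v n - u n)) s := by
  intro z t ht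
  have hD : 0 < 1 + C := by linarith [abs_nonneg (c 0), hc 0]
  have ht₂ : 0 < t / 2 := half_pos ht
  have hlower : ∀ n, min (ν (u n - s) z (t / 2 / (1 + C))) (ν (v n - s) z (t / 2 / (1 + C)))
      ≤ ν (u n + c n • (v n - u n) - s) z t := fun n =>
    calc _ ≤ min (ν ((1 - c n) • (u n - s)) z (t / 2)) (ν (c n • (v n - s)) z (t / 2)) :=
          min_le_min
            (hν.le_smul_of_abs_le ((abs_sub _ _).trans (by rw [abs_one]; linarith [hc n]))
              _ _ ht₂)
            (hν.le_smul_of_abs_le (by linarith [hc n]) _ _ ht₂)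
      _ ≤ ν ((1 - c n) • (u n - s) + c n • (v n - s)) z (t / 2 + t / 2) := hν.add _ _ _ _ _
      _ = ν (u n + c n • (v n - u n) - s) z t := by rw [add_halves]; congr 1; module
  have hmin := (hu z _ (div_pos ht₂ hD)).min (hv z _ (div_pos ht₂ hD))
  rw [min_self] at hmin
  exact tendsto_of_tendsto_of_tendsto_of_le_of_le hmin tendsto_const_nhds hlower
    (fun n => hν.le_one _ _ _)

end TendsTo2PN

theorem Monotone.exists_add_mul_sub_eq_of_tendsto {L : ℕ → ℝ} {a : ℝ} (hL : Monotone L)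
    (hlim : Tendsto L atTop (nhds a)) (N : ℕ) :
    ∃ K ≥ N, ∃ c ∈ Set.Icc (0 : ℝ) 2, L N + c * (L K - L N) = a := by
  rcases (hL.ge_of_tendsto hlim N).eq_or_lt with hN | hN
  · exact ⟨N, le_rfl, 0, by norm_num, by rw [hN]; ring⟩
  have hmid : (L N + a) / 2 < a := by linarith
  obtain ⟨K, hK⟩ := (hlim.eventually (eventually_ge_nhds hmid)).exists
  have hgap : 0 < L K - L N := by linarith
  refine ⟨K, (hL.reflect_lt (by linarith)).le, (a - L N) / (L K - L N),
    ⟨by positivity, (div_le_iff₀ hgap).2 (by linarith)⟩, ?_⟩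
  rw [div_mul_cancel₀ _ hgap.ne']
  ring

theorem Convex.sum_range_add_smul_sum_Ico_mem {E : Type*} [AddCommGroup E] [Module ℝ E]
    {F : Set E} (hF : Convex ℝ F) {l : ℕ → ℝ} {x : ℕ → E} (hl : ∀ i, 0 ≤ l i)
    (hx : ∀ i, x i ∈ F) {N K : ℕ} {c : ℝ} (hc : 0 ≤ c)
    (hsum : ∑ i ∈ range N, l i + c * ∑ i ∈ Ico N K, l i = 1) :
    ∑ i ∈ range N, l i • x i + c • ∑ i ∈ Ico N K, l i • x i ∈ F := by
  have hmem := hF.sum_mem (t := (range N).disjSum (Ico N K))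
    (w := Sum.elim l (fun i => c * l i)) (z := Sum.elim x x)
    (by rintro (i | i) -; exacts [hl i, mul_nonneg hc (hl i)])
    (by simpa only [sum_disjSum, Sum.elim_inl, Sum.elim_inr, ← mul_sum] using hsum)
    (by rintro (i | i) -; exacts [hx i, hx i])
  simpa only [sum_disjSum, Sum.elim_inl, Sum.elim_inr, mul_smul, ← smul_sum] using hmem

theorem closed_convex_convexSeriesClosed (ν : X → X → ℝ → ℝ) (hν : IsMenger2PN X ν)
    (F : Set X)
    (hconv : ∀ a ∈ F, ∀ b ∈ F, ∀ lam : ℝ, 0 < lam → lam < 1 → lam • a + (1 - lam) • b ∈ F)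
    (hclosed : clPts ν F = F) :
    ConvexSeriesClosed ν F := by
  rintro l x s ⟨hxF, hl, hsum⟩ hs
  have hF : Convex ℝ F := convex_iff_forall_pos.2 fun a ha b hb p q hp _ hpq => by
    obtain rfl : q = 1 - p := by linarith
    exact hconv a ha b hb p hp (by linarith)
  have hmono : Monotone fun N => ∑ i ∈ range N, l i :=
    monotone_nat_of_le_succ fun N => by rw [sum_range_succ]; linarith [hl N]
  choose K hK c hc hKc using hmono.exists_add_mul_sub_eq_of_tendsto hsum.tendsto_sum_nat
  rw [← hclosed]
  refine ⟨_, fun N => ?_, hs.add_smul_sub hν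
    (fun z t ht => (hs z t ht).comp (tendsto_atTop_mono hK tendsto_id))
    (fun N => (abs_of_nonneg (hc N).1).trans_le (hc N).2)⟩
  have hweights := hKc N
  rw [← sum_Ico_eq_sub _ (hK N)] at hweights
  beta_reduce
  rw [← sum_Ico_eq_sub _ (hK N)]
  exact hF.sum_range_add_smul_sum_Ico_mem hl hxF (hc N).1 hweights
end

section
/- Let (X×Y, ν) be a Menger generalized 2-PN space and A×B, C×B two nonempty D-bounded subsets of X×Y. If D⁺ is closed under the t-norm M (minimum), then (A+C)×B is D-bounded. -/
open Filter Pointwise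

/-- A Menger generalized 2-probabilistic norm on `X × Y`. -/
structure IsMG2PN (X Y : Type*) [AddCommGroup X] [Module ℝ X]
    [AddCommGroup Y] [Module ℝ Y] (ν : X → Y → ℝ → ℝ) : Prop where
  nonneg : ∀ x y t, 0 ≤ ν x y t
  le_one : ∀ x y t, ν x y t ≤ 1
  mono : ∀ x y, Monotone (ν x y)
  zero : ∀ x y t, t ≤ 0 → ν x y t = 0
  smul_left : ∀ (α : ℝ), α ≠ 0 → ∀ x y t, ν (α • x) y t = ν x y (t / |α|)
  smul_right : ∀ (α : ℝ), α ≠ 0 → ∀ x y t, ν x (α • y) t = ν x y (t / |α|)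
  add_left : ∀ x x' y t, min (ν x y t) (ν x' y t) ≤ ν (x + x') y t
  add_right : ∀ x y y' t, min (ν x y t) (ν x y' t) ≤ ν x (y + y') t

variable {X Y : Type*} [AddCommGroup X] [Module ℝ X] [AddCommGroup Y] [Module ℝ Y]

/-- The probabilistic radius of `A × B`. -/
noncomputable def radius2 (ν : X → Y → ℝ → ℝ) (A : Set X) (B : Set Y) : ℝ → ℝ :=
  Function.leftLim (fun t => sInf {v : ℝ | ∃ a ∈ A, ∃ b ∈ B, v = ν a b t})

/-- `A × B` is `𝒟`-bounded. -/
def DBounded2 (ν : X → Y → ℝ → ℝ) (A : Set X) (B : Set Y) : Prop :=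
  Tendsto (radius2 ν A B) atTop (nhds 1)

/-- `F` is a proper distance distribution function (`F ∈ 𝒟⁺`). -/
def IsDF (F : ℝ → ℝ) : Prop :=
  Monotone F ∧ (∀ t ≤ (0 : ℝ), F t = 0) ∧ Tendsto F atTop (nhds 1)

/-! Since `ν_{a+c,b} ≥ min (ν_{a,b}, ν_{c,b})`, the infimum of `ν` over `(A + C) × B` dominates the
minimum of its infima over `A × B` and `C × B`. These infima are monotone in `t`, so the inequality
survives passing to left limits: `R_{(A+C)×B} ≥ min (R_{A×B}, R_{C×B})`. The right side tends to `1`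
and every radius is at most `1`, so `R_{(A+C)×B} → 1`. -/

section

variable {α β : Type*}

noncomputable def infDistr2 (ν : α → β → ℝ → ℝ) (A : Set α) (B : Set β) (t : ℝ) : ℝ :=
  sInf {v : ℝ | ∃ a ∈ A, ∃ b ∈ B, v = ν a b t}

theorem le_infDistr2 {ν : α → β → ℝ → ℝ} {A : Set α} {B : Set β} (hA : A.Nonempty)
    (hB : B.Nonempty) {r t : ℝ} (h : ∀ a ∈ A, ∀ b ∈ B, r ≤ ν a b t) : r ≤ infDistr2 ν A B t := by
  obtain ⟨a₀, ha₀⟩ := hA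
  obtain ⟨b₀, hb₀⟩ := hB
  refine le_csInf ⟨_, a₀, ha₀, b₀, hb₀, rfl⟩ ?_
  rintro _ ⟨a, ha, b, hb, rfl⟩
  exact h a ha b hb

end

theorem Monotone.min_leftLim_le {f g h : ℝ → ℝ} (hf : Monotone f) (hg : Monotone g)
    (hh : Monotone h) (hfgh : ∀ s, min (f s) (g s) ≤ h s) (t : ℝ) :
    min (Function.leftLim f t) (Function.leftLim g t) ≤ Function.leftLim h t :=
  le_of_tendsto_of_tendsto' ((hf.tendsto_leftLim t).min (hg.tendsto_leftLim t))
    (hh.tendsto_leftLim t) hfgh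

namespace IsMG2PN

variable {ν : X → Y → ℝ → ℝ} {A C : Set X} {B : Set Y}

theorem infDistr2_le (hν : IsMG2PN X Y ν) {a : X} {b : Y} (ha : a ∈ A) (hb : b ∈ B) (t : ℝ) :
    infDistr2 ν A B t ≤ ν a b t :=
  csInf_le ⟨0, by rintro _ ⟨a, -, b, -, rfl⟩; exact hν.nonneg a b t⟩ ⟨a, ha, b, hb, rfl⟩

theorem monotone_infDistr2 (hν : IsMG2PN X Y ν) (hA : A.Nonempty) (hB : B.Nonempty) :
    Monotone (infDistr2 ν A B) := fun _ _ hst =>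
  le_infDistr2 hA hB fun _ ha _ hb => (hν.infDistr2_le ha hb _).trans (hν.mono _ _ hst)

theorem radius2_le_one (hν : IsMG2PN X Y ν) (hA : A.Nonempty) (hB : B.Nonempty) (t : ℝ) :
    radius2 ν A B t ≤ 1 := by
  obtain ⟨a, ha⟩ := hA
  obtain ⟨b, hb⟩ := hB
  calc radius2 ν A B t ≤ infDistr2 ν A B t :=
        (hν.monotone_infDistr2 ⟨a, ha⟩ ⟨b, hb⟩).leftLim_le le_rfl
    _ ≤ ν a b t := hν.infDistr2_le ha hb t
    _ ≤ 1 := hν.le_one a b t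

theorem min_infDistr2_le_infDistr2_add (hν : IsMG2PN X Y ν) (hA : A.Nonempty) (hC : C.Nonempty)
    (hB : B.Nonempty) (t : ℝ) :
    min (infDistr2 ν A B t) (infDistr2 ν C B t) ≤ infDistr2 ν (A + C) B t := by
  refine le_infDistr2 (hA.add hC) hB ?_
  rintro _ ⟨a, ha, c, hc, rfl⟩ b hb
  exact (min_le_min (hν.infDistr2_le ha hb t) (hν.infDistr2_le hc hb t)).trans
    (hν.add_left a c b t)

theorem min_radius2_le_radius2_add (hν : IsMG2PN X Y ν) (hA : A.Nonempty) (hC : C.Nonempty)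
    (hB : B.Nonempty) (t : ℝ) :
    min (radius2 ν A B t) (radius2 ν C B t) ≤ radius2 ν (A + C) B t :=
  Monotone.min_leftLim_le (hν.monotone_infDistr2 hA hB) (hν.monotone_infDistr2 hC hB)
    (hν.monotone_infDistr2 (hA.add hC) hB) (hν.min_infDistr2_le_infDistr2_add hA hC hB) t

end IsMG2PN

theorem dBounded_add_left_general (ν : X → Y → ℝ → ℝ) (hν : IsMG2PN X Y ν)
    (A C : Set X) (B : Set Y) (hA : A.Nonempty) (hC : C.Nonempty) (hB : B.Nonempty)
    (hAB : DBounded2 ν A B) (hCB : DBounded2 ν C B) :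
    DBounded2 ν (A + C) B := by
  have hmin : Tendsto (fun t => min (radius2 ν A B t) (radius2 ν C B t)) atTop (nhds 1) := by
    simpa using hAB.min hCB
  exact tendsto_of_tendsto_of_tendsto_of_le_of_le hmin tendsto_const_nhds
    (hν.min_radius2_le_radius2_add hA hC hB) (hν.radius2_le_one (hA.add hC) hB)

theorem dBounded_add_left (ν : X → Y → ℝ → ℝ) (hν : IsMG2PN X Y ν)
    (A C : Set X) (B : Set Y) (hA : A.Nonempty) (hC : C.Nonempty) (hB : B.Nonempty)
    (hAB : DBounded2 ν A B) (hCB : DBounded2 ν C B)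
    (hM : ∀ F G : ℝ → ℝ, IsDF F → IsDF G → IsDF (fun t => min (F t) (G t))) :
    DBounded2 ν (A + C) B :=
  dBounded_add_left_general ν hν A C B hA hC hB hAB hCB
end

section
/- Let (X×Y, ν) be a Menger generalized 2-PN space and suppose A×(B+D) and C×(B+D) are D-bounded. If D⁺ is closed under the t-norm M (minimum), then the Minkowski sum A×B + C×D := {(p+r, q+s) : (p,q) ∈ A×B, (r,s) ∈ C×D} is D-bounded, with R_{A×B + C×D} ≥ M{R_{A×(B+D)}, R_{C×(B+D)}}. -/
open Filter Pointwise

variable {X Y : Type*} [AddCommGroup X] [Module ℝ X] [AddCommGroup Y] [Module ℝ Y]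

/-- The probabilistic radius of a subset of `X × Y`. -/
noncomputable def radiusS (ν : X → Y → ℝ → ℝ) (S : Set (X × Y)) : ℝ → ℝ :=
  Function.leftLim (fun t => sInf {v : ℝ | ∃ p ∈ S, v = ν p.1 p.2 t})

/-!
Every point of `A ×ˢ B + C ×ˢ D` has the form `(a + c, b + d)` with `b + d ∈ B + D`, so
`ν (a + c) (b + d) t ≥ min (ν a (b + d) t) (ν c (b + d) t)` bounds it below by the minimum of the
infima defining the radii of `A ×ˢ (B + D)` and `C ×ˢ (B + D)`. Left limits of monotone functions
preserve this inequality, and since every radius is at most `1`, the sum is squeezed to `1`.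
-/

open Function

theorem Monotone.min_leftLim_le_leftLim {α β : Type*} [LinearOrder α] [TopologicalSpace α]
    [OrderTopology α] [NoMinOrder α] [DenselyOrdered α]
    [ConditionallyCompleteLinearOrder β] [TopologicalSpace β] [OrderTopology β]
    {f g h : α → β} (hf : Monotone f) (hg : Monotone g) (hh : Monotone h)
    (hle : ∀ t, min (f t) (g t) ≤ h t) (x : α) :
    min (leftLim f x) (leftLim g x) ≤ leftLim h x :=
  le_of_tendsto_of_tendsto' ((hf.tendsto_leftLim x).min (hg.tendsto_leftLim x))
    (hh.tendsto_leftLim x) hle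

noncomputable def infValue {X Y : Type*} (ν : X → Y → ℝ → ℝ) (S : Set (X × Y)) (t : ℝ) : ℝ :=
  sInf {v : ℝ | ∃ p ∈ S, v = ν p.1 p.2 t}

theorem le_infValue {X Y : Type*} {ν : X → Y → ℝ → ℝ} {S : Set (X × Y)} (hS : S.Nonempty)
    {c t : ℝ} (h : ∀ p ∈ S, c ≤ ν p.1 p.2 t) : c ≤ infValue ν S t := by
  obtain ⟨p, hp⟩ := hS
  refine le_csInf ⟨_, p, hp, rfl⟩ ?_
  rintro v ⟨q, hq, rfl⟩
  exact h q hq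

theorem radiusS_eq_leftLim_infValue {X Y : Type*} (ν : X → Y → ℝ → ℝ) (S : Set (X × Y)) :
    radiusS ν S = leftLim (infValue ν S) := rfl

theorem radius2_eq_radiusS_prod {X Y : Type*} (ν : X → Y → ℝ → ℝ) (A : Set X) (B : Set Y) :
    radius2 ν A B = radiusS ν (A ×ˢ B) := by
  have hset : ∀ t : ℝ, {v : ℝ | ∃ a ∈ A, ∃ b ∈ B, v = ν a b t} =
      {v : ℝ | ∃ p ∈ A ×ˢ B, v = ν p.1 p.2 t} := fun t => by
    ext v
    constructor
    · rintro ⟨a, ha, b, hb, rfl⟩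
      exact ⟨(a, b), ⟨ha, hb⟩, rfl⟩
    · rintro ⟨p, ⟨hp₁, hp₂⟩, rfl⟩
      exact ⟨p.1, hp₁, p.2, hp₂, rfl⟩
  simp only [radius2, radiusS, hset]

namespace IsMG2PN

variable {ν : X → Y → ℝ → ℝ} {S : Set (X × Y)}

theorem infValue_le (hν : IsMG2PN X Y ν) {p : X × Y} (hp : p ∈ S) (t : ℝ) :
    infValue ν S t ≤ ν p.1 p.2 t :=
  csInf_le ⟨0, by rintro v ⟨q, -, rfl⟩; exact hν.nonneg _ _ _⟩ ⟨p, hp, rfl⟩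

theorem infValue_mono (hν : IsMG2PN X Y ν) : Monotone (infValue ν S) := by
  intro t t' htt'
  rcases S.eq_empty_or_nonempty with rfl | hS
  · simp [infValue]
  · exact le_infValue hS fun p hp => (hν.infValue_le hp t).trans (hν.mono _ _ htt')

theorem radiusS_le_one (hν : IsMG2PN X Y ν) (hS : S.Nonempty) (t : ℝ) : radiusS ν S t ≤ 1 := by
  obtain ⟨p, hp⟩ := hS
  calc radiusS ν S t ≤ infValue ν S t := hν.infValue_mono.leftLim_le le_rfl
    _ ≤ ν p.1 p.2 t := hν.infValue_le hp t
    _ ≤ 1 := hν.le_one _ _ _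

theorem min_infValue_le_infValue_add (hν : IsMG2PN X Y ν) {A C : Set X} {B D : Set Y}
    (hS : (A ×ˢ B + C ×ˢ D).Nonempty) (t : ℝ) :
    min (infValue ν (A ×ˢ (B + D)) t) (infValue ν (C ×ˢ (B + D)) t) ≤
      infValue ν (A ×ˢ B + C ×ˢ D) t := by
  refine le_infValue hS ?_
  rintro _ ⟨⟨a, b⟩, ⟨ha, hb⟩, ⟨c, d⟩, ⟨hc, hd⟩, rfl⟩
  have hbd : b + d ∈ B + D := Set.add_mem_add hb hd
  calc min (infValue ν (A ×ˢ (B + D)) t) (infValue ν (C ×ˢ (B + D)) t)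
      ≤ min (ν a (b + d) t) (ν c (b + d) t) :=
        min_le_min (hν.infValue_le (Set.mk_mem_prod ha hbd) t)
          (hν.infValue_le (Set.mk_mem_prod hc hbd) t)
    _ ≤ ν (a + c) (b + d) t := hν.add_left _ _ _ _

theorem min_radius2_le_radiusS_add (hν : IsMG2PN X Y ν) {A C : Set X} {B D : Set Y}
    (hS : (A ×ˢ B + C ×ˢ D).Nonempty) (t : ℝ) :
    min (radius2 ν A (B + D) t) (radius2 ν C (B + D) t) ≤ radiusS ν (A ×ˢ B + C ×ˢ D) t := by
  simp only [radius2_eq_radiusS_prod, radiusS_eq_leftLim_infValue]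
  exact hν.infValue_mono.min_leftLim_le_leftLim hν.infValue_mono hν.infValue_mono
    (hν.min_infValue_le_infValue_add hS) t

end IsMG2PN

theorem dBounded_minkowski_sum_general (ν : X → Y → ℝ → ℝ) (hν : IsMG2PN X Y ν)
    (A C : Set X) (B D : Set Y)
    (hA : A.Nonempty) (hB : B.Nonempty) (hC : C.Nonempty) (hD : D.Nonempty)
    (hABD : DBounded2 ν A (B + D)) (hCBD : DBounded2 ν C (B + D)) :
    Tendsto (radiusS ν ((A ×ˢ B) + (C ×ˢ D))) atTop (nhds 1) ∧
      ∀ t : ℝ, min (radius2 ν A (B + D) t) (radius2 ν C (B + D) t) ≤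
        radiusS ν ((A ×ˢ B) + (C ×ˢ D)) t := by
  have hS : (A ×ˢ B + C ×ˢ D).Nonempty := (hA.prod hB).add (hC.prod hD)
  have hrad := hν.min_radius2_le_radiusS_add hS
  have hmin : Tendsto (fun t => min (radius2 ν A (B + D) t) (radius2 ν C (B + D) t))
      atTop (nhds 1) := by
    simpa using hABD.min hCBD
  exact ⟨tendsto_of_tendsto_of_tendsto_of_le_of_le hmin tendsto_const_nhds hrad
    (hν.radiusS_le_one hS), hrad⟩

theorem dBounded_minkowski_sum (ν : X → Y → ℝ → ℝ) (hν : IsMG2PN X Y ν)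
    (A C : Set X) (B D : Set Y)
    (hA : A.Nonempty) (hB : B.Nonempty) (hC : C.Nonempty) (hD : D.Nonempty)
    (hABD : DBounded2 ν A (B + D)) (hCBD : DBounded2 ν C (B + D))
    (hM : ∀ F G : ℝ → ℝ, IsDF F → IsDF G → IsDF (fun t => min (F t) (G t))) :
    Tendsto (radiusS ν ((A ×ˢ B) + (C ×ˢ D))) atTop (nhds 1) ∧
      ∀ t : ℝ, min (radius2 ν A (B + D) t) (radius2 ν C (B + D) t) ≤
        radiusS ν ((A ×ˢ B) + (C ×ˢ D)) t :=
  dBounded_minkowski_sum_general ν hν A C B D hA hB hC hD hABD hCBD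
end
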